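/- As t → ∞, the function x ↦ log_t(∑_j t^{α_j + ⟨j,x⟩}) converges uniformly on ℝⁿ to the tropical polynomial x ↦ max_j(α_j + ⟨j,x⟩). -/
import Mathlib


open Finset Filter

/-- Maslov dequantization: as `t → ∞`, `x ↦ log_t (∑ j, t^(α j + ⟨j,x⟩))` converges
uniformly on `ℝⁿ` to the tropical polynomial `x ↦ max_j (α j + ⟨j,x⟩)`. -/
theorem stmt_2 {n : ℕ} {ι : Type*} [Fintype ι] [Nonempty ι]
    (α : ι → ℝ) (j : ι → (Fin n → ℝ)) :
    TendstoUniformly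
      (fun (t : ℝ) (x : Fin n → ℝ) =>
        Real.log (∑ i, t ^ (α i + ∑ k, j i k * x k)) / Real.log t)
      (fun x => univ.sup' univ_nonempty fun i => α i + ∑ k, j i k * x k)
      atTop := by
  rw [Metric.tendstoUniformly_iff]
  intro ε hε
  set N : ℝ := (Fintype.card ι : ℝ) with hNdef
  have hN1 : (1:ℝ) ≤ N := Nat.one_le_cast.mpr Fintype.card_pos
  have hlogN : 0 ≤ Real.log N := Real.log_nonneg hN1
  filter_upwards [eventually_gt_atTop (max 1 (Real.exp (Real.log N / ε)))] with t ht x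
  have ht1 : 1 < t := lt_of_le_of_lt (le_max_left _ _) ht
  have ht0 : 0 < t := zero_lt_one.trans ht1
  have hlt : 0 < Real.log t := Real.log_pos ht1
  set M := univ.sup' univ_nonempty (fun i => α i + ∑ k, j i k * x k) with hM
  set S := ∑ i, t ^ (α i + ∑ k, j i k * x k) with hS
  have hle : ∀ i, α i + ∑ k, j i k * x k ≤ M := fun i => le_sup' (fun i => α i + ∑ k, j i k * x k) (mem_univ i)
  have hS_lb : t ^ M ≤ S := by
    obtain ⟨i0, -, hi0⟩ := exists_mem_eq_sup' univ_nonempty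
      (fun i => α i + ∑ k, j i k * x k)
    calc t ^ M = t ^ (α i0 + ∑ k, j i0 k * x k) := by rw [hM, hi0]
    _ ≤ S := Finset.single_le_sum (f := fun i => t ^ (α i + ∑ k, j i k * x k))
        (fun i _ => (Real.rpow_pos_of_pos ht0 _).le) (mem_univ i0)
  have hS_ub : S ≤ N * t ^ M := by
    calc S ≤ ∑ _i : ι, t ^ M :=
          Finset.sum_le_sum fun i _ =>
            Real.rpow_le_rpow_of_exponent_le ht1.le (hle i)
    _ = N * t ^ M := by rw [Finset.sum_const, nsmul_eq_mul, Finset.card_univ]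
  have hSpos : 0 < S := lt_of_lt_of_le (Real.rpow_pos_of_pos ht0 _) hS_lb
  have h1 : M ≤ Real.log S / Real.log t := by
    rw [le_div_iff₀ hlt]
    calc M * Real.log t = Real.log (t ^ M) := (Real.log_rpow ht0 M).symm
    _ ≤ Real.log S := Real.log_le_log (Real.rpow_pos_of_pos ht0 _) hS_lb
  have h2 : Real.log S / Real.log t ≤ M + Real.log N / Real.log t := by
    have : Real.log S ≤ Real.log N + M * Real.log t := by
      calc Real.log S ≤ Real.log (N * t ^ M) := Real.log_le_log hSpos hS_ub
      _ = Real.log N + M * Real.log t := by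
          rw [Real.log_mul (by linarith) (Real.rpow_pos_of_pos ht0 _).ne',
            Real.log_rpow ht0]
    rw [div_le_iff₀ hlt]
    calc Real.log S ≤ Real.log N + M * Real.log t := this
    _ = (M + Real.log N / Real.log t) * Real.log t := by
        field_simp; ring
  have hεbound : Real.log N / Real.log t < ε := by
    have h3 : Real.log N / ε < Real.log t := by
      rw [← Real.log_exp (Real.log N / ε)]
      exact Real.log_lt_log (Real.exp_pos _) (lt_of_le_of_lt (le_max_right _ _) ht)
    rw [div_lt_iff₀ hlt]
    nlinarith [mul_lt_mul_of_pos_right h3 hε, div_mul_cancel₀ (Real.log N) hε.ne']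
  rw [Real.dist_eq, abs_sub_lt_iff]
  constructor <;> [linarith; linarith]
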